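/- arXiv:math/0607525 — 3 statements merged into one kernel-verified Lean document; each statement's English description precedes it below -/
import Mathlib

section
/- The free group on a nonempty set S has asymptotic dimension exactly 1. -/
/-- The word length of a group element `g` with respect to a generating set `T`:
the length of a shortest word in `T ∪ T⁻¹` representing `g`. -/
noncomputable def wordLength {Γ : Type*} [Group Γ] (T : Set Γ) (g : Γ) : ℕ :=
  sInf {n : ℕ | ∃ w : List Γ, w.length = n ∧ (∀ x ∈ w, x ∈ T ∨ x⁻¹ ∈ T) ∧ w.prod = g}

/-- The word metric on a group with respect to a generating set `T`. -/
noncomputable def wordDist {Γ : Type*} [Group Γ] (T : Set Γ) (g₁ g₂ : Γ) : ℝ :=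
  (wordLength T (g₁⁻¹ * g₂) : ℝ)

/-- `AsdimLE d n` : the asymptotic dimension of the space `X` with distance function `d`
is at most `n`: for every `R > 0` there is a cover of `X` by sets of uniformly bounded
diameter such that every `R`-ball meets at most `n + 1` members of the cover. -/

def AsdimLE {X : Type*} (d : X → X → ℝ) (n : ℕ) : Prop :=
  ∀ R : ℝ, 0 < R → ∃ 𝒰 : Set (Set X),
    (∀ x : X, ∃ U ∈ 𝒰, x ∈ U) ∧
    (∃ D : ℝ, ∀ U ∈ 𝒰, ∀ x ∈ U, ∀ y ∈ U, d x y ≤ D) ∧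
    (∀ x : X, {U | U ∈ 𝒰 ∧ ∃ y ∈ U, d x y < R}.Finite ∧
      {U | U ∈ 𝒰 ∧ ∃ y ∈ U, d x y < R}.ncard ≤ n + 1)

/-- The asymptotic dimension of the space `X` with distance function `d`, as an element
of `ℕ∞` (it is `⊤` if no `n` with `AsdimLE d n` exists). -/
noncomputable def asdim {X : Type*} (d : X → X → ℝ) : ℕ∞ :=
  sInf ((↑) '' {n : ℕ | AsdimLE d n})

/-- The asymptotic dimension of a (not necessarily finitely generated) group: the supremum,
over all finitely generated subgroups `H` (equipped with the word metric coming from a finite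
generating set `T` of `H`), of the asymptotic dimension of `H`. -/
noncomputable def groupAsdim (G : Type*) [Group G] : ℕ∞ :=
  ⨆ (H : Subgroup G) (T : Set H) (_ : T.Finite) (_ : Subgroup.closure T = ⊤),
    asdim (wordDist T)

/-- A reduced word in a free group is cyclically reduced if its first letter is not
the inverse of its last letter. -/

def CyclicallyReduced {α : Type*} [DecidableEq α] (r : FreeGroup α) : Prop :=
  ∀ (x : α) (b : Bool), ¬ (r.toWord.head? = some (x, b) ∧ r.toWord.getLast? = some (x, !b))

/-- The exponent sum of the letter `t` in the word `r`. -/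
def expSum {α : Type*} [DecidableEq α] (t : α) (r : FreeGroup α) : ℤ :=
  (r.toWord.map (fun p => if p.1 = t then (if p.2 then (1 : ℤ) else -1) else 0)).sum

/-!
A finitely generated subgroup of a free group is free (Nielsen–Schreier) of finite rank, so its
word metric is bi-Lipschitz to the metric `|x⁻¹ y|` of a free group with its standard basis.
There, given `R ≤ m`, cut the group into annuli `2mk ≤ |g| < 2m(k+1)` and split each annulus by
the prefix of length `2mk - m`. Since the Cayley graph is a tree, two words with Gromov product
at least `q` share their prefix of length `q`; hence the pieces have diameter at most `6m`, and an
`R`-ball meets at most one piece in each of at most two consecutive annuli: `asdim ≤ 1`.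
Conversely, a `0`-dimensional cover at scale `2` of the cyclic subgroup generated by a letter
would contain all its powers in one bounded set.
-/

section AsymptoticDimension

variable {X Y : Type*} {d : X → X → ℝ} {n : ℕ}

theorem AsdimLE.of_fibers
    (h : ∀ R, 0 < R → ∃ (τ : X → Y) (D : ℝ), (∀ y z, τ y = τ z → d y z ≤ D) ∧
      ∀ x, (τ '' {y | d x y < R}).Finite ∧ (τ '' {y | d x y < R}).ncard ≤ n + 1) :
    AsdimLE d n := by
  intro R hR
  obtain ⟨τ, D, hD, hball⟩ := h R hR
  refine ⟨Set.range fun x => τ ⁻¹' {τ x}, fun x => ⟨_, ⟨x, rfl⟩, rfl⟩,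
    ⟨D, ?_⟩, fun x => ?_⟩
  · rintro _ ⟨x, rfl⟩ y hy z hz
    exact hD y z (hy.trans hz.symm)
  · obtain ⟨hfin, hcard⟩ := hball x
    have hsub : {U | U ∈ Set.range (fun x => τ ⁻¹' {τ x}) ∧ ∃ y ∈ U, d x y < R} ⊆
        (fun c => τ ⁻¹' {c}) '' (τ '' {y | d x y < R}) := by
      rintro _ ⟨⟨z, rfl⟩, y, hy, hxy⟩
      exact ⟨τ y, ⟨y, hxy, rfl⟩, by rw [show τ y = τ z from hy]⟩
    exact ⟨(hfin.image _).subset hsub,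
      (Set.ncard_le_ncard hsub (hfin.image _)).trans ((Set.ncard_image_le hfin).trans hcard)⟩

theorem AsdimLE.comap {dY : Y → Y → ℝ} (h : AsdimLE dY n) (f : X → Y) {C : ℝ} (hC : 0 < C)
    (hX : ∀ x y, d x y ≤ C * dY (f x) (f y)) (hY : ∀ x y, dY (f x) (f y) ≤ C * d x y) :
    AsdimLE d n := by
  intro R hR
  obtain ⟨𝒰, hcov, ⟨D, hD⟩, hball⟩ := h (C * R) (by positivity)
  refine ⟨Set.preimage f '' 𝒰, fun x => ?_, ⟨C * D, ?_⟩, fun x => ?_⟩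
  · obtain ⟨U, hU, hxU⟩ := hcov (f x)
    exact ⟨f ⁻¹' U, ⟨U, hU, rfl⟩, hxU⟩
  · rintro _ ⟨U, hU, rfl⟩ x hx y hy
    exact (hX x y).trans (mul_le_mul_of_nonneg_left (hD U hU _ hx _ hy) hC.le)
  · obtain ⟨hfin, hcard⟩ := hball (f x)
    have hsub : {V | V ∈ Set.preimage f '' 𝒰 ∧ ∃ y ∈ V, d x y < R} ⊆
        Set.preimage f '' {U | U ∈ 𝒰 ∧ ∃ z ∈ U, dY (f x) z < C * R} := by
      rintro _ ⟨⟨U, hU, rfl⟩, y, hy, hxy⟩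
      exact ⟨U, ⟨hU, f y, hy, (hY x y).trans_lt (by gcongr)⟩, rfl⟩
    exact ⟨(hfin.image _).subset hsub,
      (Set.ncard_le_ncard hsub (hfin.image _)).trans ((Set.ncard_image_le hfin).trans hcard)⟩

theorem AsdimLE.bddAbove_of_chain (h : AsdimLE d 0) {R : ℝ} (hR : 0 < R) (u : ℕ → X)
    (hu : ∀ k, d (u k) (u k) < R ∧ d (u k) (u (k + 1)) < R) :
    BddAbove (Set.range fun k => d (u 0) (u k)) := by
  obtain ⟨𝒰, hcov, ⟨D, hD⟩, hball⟩ := h R hR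
  obtain ⟨U₀, hU₀, hu₀⟩ := hcov (u 0)
  have hmem : ∀ k, u k ∈ U₀ := by
    intro k
    induction k with
    | zero => exact hu₀
    | succ k ih =>
      obtain ⟨U, hU, huU⟩ := hcov (u (k + 1))
      obtain ⟨hfin, hcard⟩ := hball (u k)
      have hsub := (Set.ncard_le_one hfin).mp hcard
      have hU_mem : U ∈ {U | U ∈ 𝒰 ∧ ∃ y ∈ U, d (u k) y < R} := ⟨hU, _, huU, (hu k).2⟩
      have hU₀_mem : U₀ ∈ {U | U ∈ 𝒰 ∧ ∃ y ∈ U, d (u k) y < R} := ⟨hU₀, _, ih, (hu k).1⟩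
      rwa [hsub U hU_mem U₀ hU₀_mem] at huU
  exact ⟨D, by rintro _ ⟨k, rfl⟩; exact hD U₀ hU₀ _ hu₀ _ (hmem k)⟩

theorem asdim_le_of_asdimLE (h : AsdimLE d n) : asdim d ≤ n :=
  sInf_le ⟨n, h, rfl⟩

theorem one_le_asdim (h : ¬ AsdimLE d 0) : 1 ≤ asdim d := by
  refine le_sInf ?_
  rintro _ ⟨k, hk, rfl⟩
  exact Nat.one_le_cast.mpr (Nat.one_le_iff_ne_zero.mpr (by rintro rfl; exact h hk))

theorem groupAsdim_le_of_forall {G : Type*} [Group G] {n : ℕ}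
    (h : ∀ (H : Subgroup G) (T : Set H), T.Finite → Subgroup.closure T = ⊤ →
      AsdimLE (wordDist T) n) : groupAsdim G ≤ n :=
  iSup₂_le fun H T => iSup₂_le fun hT hgen => asdim_le_of_asdimLE (h H T hT hgen)

theorem asdim_le_groupAsdim {G : Type*} [Group G] (H : Subgroup G) (T : Set H) (hT : T.Finite)
    (hgen : Subgroup.closure T = ⊤) : asdim (wordDist T) ≤ groupAsdim G :=
  le_iSup₂_of_le H T (le_iSup₂_of_le hT hgen le_rfl)

end AsymptoticDimension

section WordLength

variable {Γ : Type*} [Group Γ] {T : Set Γ}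

theorem wordLength_le_length {g : Γ} (w : List Γ) (hw : ∀ x ∈ w, x ∈ T ∨ x⁻¹ ∈ T)
    (hg : w.prod = g) : wordLength T g ≤ w.length :=
  Nat.sInf_le ⟨w, rfl, hw, hg⟩

theorem exists_list_length_eq_wordLength (hgen : Subgroup.closure T = ⊤) (g : Γ) :
    ∃ w : List Γ, w.length = wordLength T g ∧ (∀ x ∈ w, x ∈ T ∨ x⁻¹ ∈ T) ∧ w.prod = g := by
  have hg : g ∈ (Subgroup.closure T).toSubmonoid := hgen ▸ Subgroup.mem_top g
  rw [Subgroup.closure_toSubmonoid] at hg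
  obtain ⟨w, hw, hprod⟩ := Submonoid.exists_list_of_mem_closure hg
  exact Nat.sInf_mem (s := {n | ∃ w : List Γ, w.length = n ∧ (∀ x ∈ w, x ∈ T ∨ x⁻¹ ∈ T) ∧
    w.prod = g}) ⟨w.length, w, rfl, hw, hprod⟩

theorem wordLength_one : wordLength T (1 : Γ) = 0 :=
  Nat.le_zero.mp (wordLength_le_length [] (by simp) rfl)

theorem wordLength_mul_le (hgen : Subgroup.closure T = ⊤) (g h : Γ) :
    wordLength T (g * h) ≤ wordLength T g + wordLength T h := by
  obtain ⟨v, hv, hvT, rfl⟩ := exists_list_length_eq_wordLength hgen g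
  obtain ⟨w, hw, hwT, rfl⟩ := exists_list_length_eq_wordLength hgen h
  rw [← hv, ← hw, ← List.length_append, ← List.prod_append]
  exact wordLength_le_length _ (fun x hx => (List.mem_append.mp hx).elim (hvT x) (hwT x)) rfl

theorem apply_list_prod_le {M : Type*} [Monoid M] (ℓ : M → ℕ) (h1 : ℓ 1 = 0)
    (hmul : ∀ a b, ℓ (a * b) ≤ ℓ a + ℓ b) {C : ℕ} :
    ∀ w : List M, (∀ x ∈ w, ℓ x ≤ C) → ℓ w.prod ≤ C * w.length
  | [], _ => by simp [h1]
  | x :: w, hw => by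
    have := apply_list_prod_le ℓ h1 hmul w fun y hy => hw y (List.mem_cons_of_mem x hy)
    rw [List.prod_cons, List.length_cons, mul_add_one]
    linarith [hmul x w.prod, hw x List.mem_cons_self]

theorem le_mul_wordLength (hgen : Subgroup.closure T = ⊤) (ℓ : Γ → ℕ) (h1 : ℓ 1 = 0)
    (hmul : ∀ a b, ℓ (a * b) ≤ ℓ a + ℓ b) {C : ℕ} (hC : ∀ x, x ∈ T ∨ x⁻¹ ∈ T → ℓ x ≤ C)
    (g : Γ) : ℓ g ≤ C * wordLength T g := by
  obtain ⟨w, hw, hwT, rfl⟩ := exists_list_length_eq_wordLength hgen g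
  rw [← hw]
  exact apply_list_prod_le ℓ h1 hmul w fun x hx => hC x (hwT x hx)

theorem exists_le_mul_wordLength (hT : T.Finite) (hgen : Subgroup.closure T = ⊤) (ℓ : Γ → ℕ)
    (h1 : ℓ 1 = 0) (hmul : ∀ a b, ℓ (a * b) ≤ ℓ a + ℓ b) :
    ∃ C : ℕ, ∀ g, ℓ g ≤ C * wordLength T g := by
  obtain ⟨C, hC⟩ := ((hT.union hT.inv).image ℓ).bddAbove
  exact ⟨C, le_mul_wordLength hgen ℓ h1 hmul fun x hx => hC ⟨x, hx, rfl⟩⟩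

end WordLength

namespace FreeGroup

variable {α : Type*} [DecidableEq α]

theorem IsReduced.invRev {L : List (α × Bool)} (h : IsReduced L) : IsReduced (invRev L) :=
  isReduced_iff_reduce_eq.mpr (by rw [reduce_invRev, h.reduce_eq])

theorem isReduced_invRev_append {a b : α × Bool} {L₁ L₂ : List (α × Bool)}
    (h₁ : IsReduced (a :: L₁)) (h₂ : IsReduced (b :: L₂)) (hab : a ≠ b) :
    IsReduced (invRev (a :: L₁) ++ b :: L₂) := by
  have h₁' := h₁.invRev
  rw [invRev_cons] at h₁' ⊢
  refine IsReduced.append_overlap h₁' ?_ (List.cons_ne_nil _ _)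
  refine isReduced_cons_cons.mpr ⟨fun h => ?_, h₂⟩
  exact (Bool.eq_not.mpr fun h' => hab (Prod.ext h h'.symm)).symm

/-- The common prefix of two reduced words is at least their Gromov product: once the first letters
differ, nothing cancels in `invRev L₁ ++ L₂`. -/
theorem take_eq_of_two_mul_add_norm_le :
    ∀ {L₁ L₂ : List (α × Bool)}, IsReduced L₁ → IsReduced L₂ → ∀ {q : ℕ},
      2 * q + ((mk L₁)⁻¹ * mk L₂).norm ≤ L₁.length + L₂.length → L₁.take q = L₂.take q
  | _, _, _, _, 0, _ => rfl
  | [], L₂, _, h₂, q + 1, hq => by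
    simp [norm, toWord_mk, ← one_eq_mk, h₂.reduce_eq] at hq
  | L₁, [], h₁, _, q + 1, hq => by
    simp [norm, toWord_mk, ← one_eq_mk, reduce_invRev, h₁.reduce_eq] at hq
  | a :: L₁, b :: L₂, h₁, h₂, q + 1, hq => by
    by_cases hab : a = b
    · subst hab
      have hcancel : (mk (a :: L₁))⁻¹ * mk (a :: L₂) = (mk L₁)⁻¹ * mk L₂ := by
        rw [← List.singleton_append, ← mul_mk, ← List.singleton_append (l := L₂), ← mul_mk]
        group
      rw [hcancel] at hq
      simp only [List.take_succ_cons, List.length_cons] at hq ⊢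
      have h₁' : IsReduced L₁ := h₁.tail
      have h₂' : IsReduced L₂ := h₂.tail
      rw [take_eq_of_two_mul_add_norm_le h₁' h₂' (by omega)]
    · have hred := (isReduced_invRev_append h₁ h₂ hab).reduce_eq
      simp only [norm, inv_mk, mul_mk, toWord_mk, hred, List.length_append, invRev_length,
        List.length_cons] at hq
      omega

theorem toWord_take_eq_of_two_mul_add_norm_le {y z : FreeGroup α} {q : ℕ}
    (h : 2 * q + (y⁻¹ * z).norm ≤ y.norm + z.norm) : y.toWord.take q = z.toWord.take q := by
  refine take_eq_of_two_mul_add_norm_le isReduced_toWord isReduced_toWord ?_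
  rwa [mk_toWord, mk_toWord]

theorem norm_inv_mul_le_of_toWord_take_eq {y z : FreeGroup α} {q : ℕ}
    (h : y.toWord.take q = z.toWord.take q) :
    (y⁻¹ * z).norm ≤ (y.norm - q) + (z.norm - q) := by
  have hsplit : ∀ x : FreeGroup α, x = mk (x.toWord.take q) * mk (x.toWord.drop q) := fun x => by
    rw [mul_mk, List.take_append_drop, mk_toWord]
  have hcancel : y⁻¹ * z = (mk (y.toWord.drop q))⁻¹ * mk (z.toWord.drop q) := by
    conv_lhs => rw [hsplit y, hsplit z, ← h]
    group
  calc (y⁻¹ * z).norm ≤ (mk (y.toWord.drop q))⁻¹.norm + (mk (z.toWord.drop q)).norm :=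
        hcancel ▸ norm_mul_le _ _
    _ ≤ (y.norm - q) + (z.norm - q) := by
        rw [norm_inv_eq]
        exact add_le_add (norm_mk_le.trans (List.length_drop ..).le)
          (norm_mk_le.trans (List.length_drop ..).le)

theorem norm_inv_mul_le_add (x y z : FreeGroup α) :
    (y⁻¹ * z).norm ≤ (x⁻¹ * y).norm + (x⁻¹ * z).norm := by
  calc (y⁻¹ * z).norm = ((x⁻¹ * y)⁻¹ * (x⁻¹ * z)).norm := by group
    _ ≤ (x⁻¹ * y)⁻¹.norm + (x⁻¹ * z).norm := norm_mul_le _ _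
    _ = (x⁻¹ * y).norm + (x⁻¹ * z).norm := by rw [norm_inv_eq]

def annulusTag (L m : ℕ) (g : FreeGroup α) : ℕ × List (α × Bool) :=
  (g.norm / L, g.toWord.take (g.norm / L * L - m))

theorem norm_inv_mul_le_of_annulusTag_eq {L m : ℕ} (hL : 0 < L) {y z : FreeGroup α}
    (h : annulusTag L m y = annulusTag L m z) : (y⁻¹ * z).norm ≤ 2 * (L + m) := by
  obtain ⟨hk, htake⟩ := Prod.ext_iff.mp h
  dsimp only [annulusTag] at hk htake
  rw [← hk] at htake
  have hy := Nat.lt_div_mul_add (a := y.norm) hL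
  have hz := hk ▸ Nat.lt_div_mul_add (a := z.norm) hL
  have := norm_inv_mul_le_of_toWord_take_eq htake
  omega

theorem annulusTag_eq_of_norm_inv_mul_le {L m : ℕ} {y z : FreeGroup α}
    (hk : y.norm / L = z.norm / L) (h : (y⁻¹ * z).norm ≤ 2 * m) :
    annulusTag L m y = annulusTag L m z := by
  refine Prod.ext hk ?_
  dsimp only [annulusTag]
  rw [← hk]
  apply toWord_take_eq_of_two_mul_add_norm_le
  have hy := Nat.div_mul_le_self y.norm L
  have hz := hk ▸ Nat.div_mul_le_self z.norm L
  have hyz := norm_inv_mul_le_add 1 y z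
  rw [inv_one, one_mul, one_mul] at hyz
  omega

theorem asdimLE_one : AsdimLE (fun x y : FreeGroup α => ((x⁻¹ * y).norm : ℝ)) 1 := by
  refine AsdimLE.of_fibers (Y := ℕ × List (α × Bool)) fun R hR => ?_
  obtain ⟨m, hm, hRm⟩ : ∃ m : ℕ, 0 < m ∧ ∀ r : ℕ, (r : ℝ) < R → r < m :=
    ⟨⌈R⌉₊, Nat.ceil_pos.mpr hR, fun r hr => Nat.lt_ceil.mpr hr⟩
  refine ⟨annulusTag (2 * m) m, (2 * (2 * m + m) : ℕ), fun y z h => ?_, fun x => ?_⟩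
  · exact_mod_cast norm_inv_mul_le_of_annulusTag_eq (by omega) h
  set ball := {y : FreeGroup α | ((x⁻¹ * y).norm : ℝ) < R}
  have hclose : ∀ y ∈ ball, (x⁻¹ * y).norm < m := fun y hy => hRm _ hy
  obtain ⟨a, ha⟩ : ∃ a, a = (x.norm - m) / (2 * m) := ⟨_, rfl⟩
  have hmaps : Set.MapsTo Prod.fst (annulusTag (2 * m) m '' ball) {a, a + 1} := by
    rintro _ ⟨y, hy, rfl⟩
    have hxy := hclose y hy
    have hyx := norm_inv_mul_le_add x 1 y
    have hxy' := norm_inv_mul_le_add y 1 x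
    rw [inv_one, one_mul, mul_one, norm_inv_eq] at hyx
    rw [inv_one, one_mul, mul_one, norm_inv_eq, show y⁻¹ * x = (x⁻¹ * y)⁻¹ by group,
      norm_inv_eq] at hxy'
    have hlo : a ≤ y.norm / (2 * m) := ha ▸ Nat.div_le_div_right (by omega)
    have hhi : y.norm / (2 * m) ≤ a + 1 := by
      rw [ha, ← Nat.add_div_right _ (by omega : 0 < 2 * m)]
      exact Nat.div_le_div_right (by omega)
    simp only [annulusTag, Set.mem_insert_iff, Set.mem_singleton_iff]
    omega
  have hinj : Set.InjOn Prod.fst (annulusTag (2 * m) m '' ball) := by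
    rintro _ ⟨y, hy, rfl⟩ _ ⟨z, hz, rfl⟩ hk
    refine annulusTag_eq_of_norm_inv_mul_le hk ?_
    linarith [norm_inv_mul_le_add x y z, hclose y hy, hclose z hz]
  have hpair : ({a, a + 1} : Set ℕ).Finite := Set.toFinite _
  exact ⟨Set.Finite.of_finite_image (hpair.subset hmaps.image_subset) hinj,
    (Set.ncard_le_ncard_of_injOn _ hmaps hinj hpair).trans (Set.ncard_pair (by omega)).le⟩

theorem exists_le_mul_norm [Finite α] (ℓ : FreeGroup α → ℕ) (h1 : ℓ 1 = 0)
    (hmul : ∀ a b, ℓ (a * b) ≤ ℓ a + ℓ b) : ∃ C : ℕ, ∀ g, ℓ g ≤ C * g.norm := by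
  let letter : α × Bool → FreeGroup α := fun p => cond p.2 (of p.1) (of p.1)⁻¹
  obtain ⟨C, hC⟩ := (Set.finite_range (ℓ ∘ letter)).bddAbove
  refine ⟨C, fun g => ?_⟩
  have hprod : (g.toWord.map letter).prod = g := by rw [← lift_mk, mk_toWord, lift_of_apply]
  have := apply_list_prod_le ℓ h1 hmul (g.toWord.map letter) <| by
    rintro _ hx
    obtain ⟨p, -, rfl⟩ := List.mem_map.mp hx
    exact hC ⟨p, rfl⟩
  rwa [hprod, List.length_map] at this

theorem finite_of_fg {β : Type*} (h : Group.FG (FreeGroup β)) : Finite β := by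
  classical
  obtain ⟨T, hgen, hT⟩ := Group.fg_iff.mp h
  set letters : Set β := ⋃ t ∈ T, {a | ∃ b, (a, b) ∈ t.toWord}
  have hfin : letters.Finite :=
    hT.biUnion fun t _ => (t.toWord.map Prod.fst).finite_toSet.subset
      fun a ⟨b, hb⟩ => List.mem_map.mpr ⟨(a, b), hb, rfl⟩
  have hsub : ∀ g ∈ Subgroup.closure T, ∀ p ∈ g.toWord, p.1 ∈ letters := by
    intro g hg
    induction hg using Subgroup.closure_induction with
    | mem t ht => exact fun p hp => Set.mem_biUnion ht ⟨p.2, hp⟩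
    | one => simp
    | mul g h _ _ hg hh => exact fun p hp =>
        ((toWord_mul_sublist g h).subset hp |> List.mem_append.mp).elim (hg p) (hh p)
    | inv g _ hg =>
        intro p hp
        rw [toWord_inv, invRev, List.mem_reverse, List.mem_map] at hp
        obtain ⟨q, hq, rfl⟩ := hp
        exact hg q hq
  refine Set.finite_univ_iff.mp (hfin.subset fun a _ => ?_)
  exact hsub (of a) (hgen ▸ Subgroup.mem_top _) (a, true) (by simp [toWord_of])

theorem exists_not_asdimLE_zero (S : Type*) [Nonempty S] :
    ∃ (H : Subgroup (FreeGroup S)) (T : Set H), T.Finite ∧ Subgroup.closure T = ⊤ ∧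
      ¬ AsdimLE (wordDist T) 0 := by
  classical
  obtain ⟨s⟩ := ‹Nonempty S›
  let H := Subgroup.closure {of s}
  let T : Set H := (↑) ⁻¹' {of s}
  let t : H := ⟨of s, Subgroup.subset_closure rfl⟩
  have hgen : Subgroup.closure T = ⊤ := Subgroup.closure_closure_coe_preimage
  refine ⟨H, T, (Set.finite_singleton _).preimage Subtype.val_injective.injOn, hgen,
    fun h0 => ?_⟩
  have hnorm := le_mul_wordLength hgen (fun g => (g : FreeGroup S).norm) norm_one
    (fun g h => norm_mul_le (g : FreeGroup S) h) (C := 1) <| by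
      rintro x (hx | hx) <;> rw [Set.mem_preimage, Set.mem_singleton_iff] at hx
      · rw [hx, norm_of]
      · rw [← norm_inv_eq, ← Subgroup.coe_inv, hx, norm_of]
  have ht : wordLength T t ≤ 1 := wordLength_le_length [t] (by simp [T, t]) (by simp)
  obtain ⟨D, hD⟩ := h0.bddAbove_of_chain two_pos (fun k => t ^ k) fun k => by
    simp only [wordDist, inv_mul_cancel, wordLength_one, pow_succ, inv_mul_cancel_left]
    exact ⟨by norm_num, by exact_mod_cast ht.trans_lt one_lt_two⟩
  obtain ⟨k, hk⟩ := exists_nat_gt D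
  have hk_le : k ≤ wordLength T (t ^ k) := by
    simpa [t, norm_of_pow] using hnorm (t ^ k)
  have hD_k : (wordLength T (t ^ k) : ℝ) ≤ D := by
    simpa [wordDist] using hD ⟨k, rfl⟩
  linarith [(Nat.cast_le (α := ℝ)).mpr hk_le]

end FreeGroup

theorem asdimLE_one_of_isFreeGroup {Γ : Type*} [Group Γ] [IsFreeGroup Γ] {T : Set Γ}
    (hT : T.Finite) (hgen : Subgroup.closure T = ⊤) : AsdimLE (wordDist T) 1 := by
  classical
  let e := IsFreeGroup.toFreeGroup Γ
  have : Group.FG Γ := Group.fg_iff.mpr ⟨T, hgen, hT⟩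
  have : Finite (IsFreeGroup.Generators Γ) :=
    FreeGroup.finite_of_fg (Group.fg_of_surjective (f := e.toMonoidHom) e.surjective)
  obtain ⟨C₁, hC₁⟩ := FreeGroup.exists_le_mul_norm (fun g => wordLength T (e.symm g))
    (by simp [wordLength_one]) fun a b => by simpa using wordLength_mul_le hgen _ _
  obtain ⟨C₂, hC₂⟩ := exists_le_mul_wordLength hT hgen (fun g => (e g).norm)
    (by simp [FreeGroup.norm_one]) fun a b => by simpa using FreeGroup.norm_mul_le _ _
  refine FreeGroup.asdimLE_one.comap e (C := ((C₁ + C₂ + 1 : ℕ) : ℝ)) (by positivity)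
    (fun x y => ?_) (fun x y => ?_) <;> simp only [wordDist]
  · have h := hC₁ (e (x⁻¹ * y))
    rw [MulEquiv.symm_apply_apply, map_mul, map_inv] at h
    exact_mod_cast h.trans (Nat.mul_le_mul_right _ (by omega))
  · have h := hC₂ (x⁻¹ * y)
    rw [map_mul, map_inv] at h
    exact_mod_cast h.trans (Nat.mul_le_mul_right _ (by omega))

/-- The asymptotic dimension of a free group on a nonempty set is exactly `1`. -/
theorem asdim_free_group (S : Type*) [Nonempty S] :
    groupAsdim (FreeGroup S) = 1 := by
  refine le_antisymm (groupAsdim_le_of_forall fun H T hT hgen =>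
    asdimLE_one_of_isFreeGroup hT hgen) ?_
  obtain ⟨H, T, hT, hgen, h0⟩ := FreeGroup.exists_not_asdimLE_zero S
  exact (one_le_asdim h0).trans (asdim_le_groupAsdim H T hT hgen)
end

section
/- Let G = ⟨u, v, c, d, … | r⟩ be a one relator group with r cyclically reduced, in which the exponent sums of u and v in r are α ≠ 0 and β ≠ 0 respectively. Let C = ⟨t, b, c, d, … | r(b t^{−β}, t^{α}, c, d, …)⟩, the one relator group whose relator is obtained from r by substituting b t^{−β} for u and t^{α} for v. Then the homomorphism Ψ determined by u ↦ b t^{−β}, v ↦ t^{α}, c ↦ c, d ↦ d, … is an injective group homomorphism Ψ : G → C. -/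
/-- The substitution `u ↦ b t⁻ᵝ`, `v ↦ tᵅ`, `x ↦ x` for all other letters, where the
target alphabet is `Bool ⊕ {x // x ≠ u ∧ x ≠ v}`, with `Sum.inl true` playing the role
of `t` and `Sum.inl false` the role of `b`. -/
def substMap {S : Type*} [DecidableEq S] (u v : S) (α β : ℤ) :
    S → FreeGroup (Bool ⊕ {x : S // x ≠ u ∧ x ≠ v}) := fun x =>
  if hu : x = u then
    FreeGroup.of (Sum.inl false) * (FreeGroup.of (Sum.inl true)) ^ (-β)
  else if hv : x = v then
    (FreeGroup.of (Sum.inl true)) ^ α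
  else FreeGroup.of (Sum.inr ⟨x, hu, hv⟩)

/-! Writing `e_v` for the exponent sum of `v` in `r`, the character `u ↦ e_v`, `v ↦ -α` of the
free group kills `r`, so `v` has infinite order in `G` because `α ≠ 0`. Hence `G` embeds into the
amalgam `G *_{v = tᵅ} ⟨t⟩`, in which `v` has an `α`-th root `t`. The inverse substitution
`t ↦ t`, `b ↦ u tᵝ`, `x ↦ x` maps the relator of `C` to `r`, so it defines a homomorphism
`C → G *_{v = tᵅ} ⟨t⟩` whose composite with `Ψ` is that embedding; therefore `Ψ` is injective. -/

open Function

section ExpSum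

variable {α : Type*} [DecidableEq α]

def expSumHom (t : α) : FreeGroup α →* Multiplicative ℤ :=
  FreeGroup.lift fun s => Multiplicative.ofAdd (if s = t then 1 else 0)

theorem toAdd_expSumHom (t : α) (w : FreeGroup α) :
    Multiplicative.toAdd (expSumHom t w) = expSum t w := by
  rw [expSum, expSumHom, ← FreeGroup.mk_toWord (x := w), FreeGroup.lift_mk, FreeGroup.toWord_mk,
    FreeGroup.reduce_toWord]
  induction w.toWord with
  | nil => rfl
  | cons p L ih =>
    obtain ⟨s, _ | _⟩ := p <;> by_cases hs : s = t <;> simp [hs, ih]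

end ExpSum

theorem PresentedGroup.not_isOfFinOrder_of_apply_ne_one {α M : Type*} [Group M]
    [IsMulTorsionFree M] {rels : Set (FreeGroup α)} (χ : FreeGroup α →* M)
    (hχ : ∀ ρ ∈ rels, χ ρ = 1) {x : α} (hx : χ (FreeGroup.of x) ≠ 1) :
    ¬IsOfFinOrder (PresentedGroup.of x : PresentedGroup rels) := by
  have hlift : FreeGroup.lift (fun s => χ (FreeGroup.of s)) = χ :=
    FreeGroup.ext_hom _ _ fun _ => FreeGroup.lift_apply_of
  have hrels : ∀ ρ ∈ rels, FreeGroup.lift (fun s => χ (FreeGroup.of s)) ρ = 1 := by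
    rw [hlift]; exact hχ
  intro hfin
  have := (PresentedGroup.toGroup hrels).isOfFinOrder hfin
  rw [PresentedGroup.toGroup.of, isOfFinOrder_iff_eq_one] at this
  exact hx this

theorem not_isOfFinOrder_of_expSum_ne_zero {S : Type*} [DecidableEq S] {u v : S} (huv : u ≠ v)
    {r : FreeGroup S} (hu : expSum u r ≠ 0) :
    ¬IsOfFinOrder (PresentedGroup.of v : PresentedGroup ({r} : Set (FreeGroup S))) := by
  refine PresentedGroup.not_isOfFinOrder_of_apply_ne_one
    (expSumHom u ^ expSum v r * expSumHom v ^ (-expSum u r)) ?_ ?_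
  · rintro ρ rfl
    apply Multiplicative.toAdd.injective
    simp only [MonoidHom.mul_apply, MonoidHom.zpow_apply, toAdd_mul, toAdd_zpow, toAdd_expSumHom,
      smul_eq_mul, toAdd_one]
    ring
  · intro h
    apply hu
    simpa [toAdd_expSumHom, expSum, huv, huv.symm] using congrArg Multiplicative.toAdd h

universe w

section

variable {G : Type w} [Group G]

def RootAmalgam.Factor (G : Type w) : Bool → Type w :=
  fun b => cond b G (ULift (Multiplicative ℤ))

instance RootAmalgam.instGroupFactor : ∀ b, Group (RootAmalgam.Factor G b)
  | true => inferInstanceAs (Group G)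
  | false => inferInstanceAs (Group (ULift (Multiplicative ℤ)))

def RootAmalgam.legs (g : G) (a : ℤ) : ∀ b, Multiplicative ℤ →* RootAmalgam.Factor G b
  | true => zpowersHom G g
  | false => zpowersHom (ULift (Multiplicative ℤ)) (ULift.up (Multiplicative.ofAdd a))

/-- The amalgamated product `G *_{g = tᵃ} ⟨t⟩`, in which `g` acquires an `a`-th root `t`. -/
abbrev RootAmalgam (g : G) (a : ℤ) : Type w :=
  Monoid.PushoutI (RootAmalgam.legs g a)

namespace RootAmalgam

variable (g : G) (a : ℤ)

def inclusion : G →* RootAmalgam g a :=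
  Monoid.PushoutI.of (φ := legs g a) true

def root : RootAmalgam g a :=
  Monoid.PushoutI.of (φ := legs g a) false (ULift.up (Multiplicative.ofAdd 1))

theorem root_zpow : root g a ^ a = inclusion g a g := by
  have hroot : (ULift.up (Multiplicative.ofAdd 1) : ULift (Multiplicative ℤ)) ^ a
      = zpowersHom _ (ULift.up (Multiplicative.ofAdd a)) (Multiplicative.ofAdd 1) := by
    apply ULift.down_injective
    simp [← ofAdd_zsmul]
  calc root g a ^ a = Monoid.PushoutI.of false (legs g a false (Multiplicative.ofAdd 1)) :=
        (map_zpow _ _ a).symm.trans (congrArg _ hroot)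
    _ = Monoid.PushoutI.of true (legs g a true (Multiplicative.ofAdd 1)) := by
        rw [Monoid.PushoutI.of_apply_eq_base, Monoid.PushoutI.of_apply_eq_base]
    _ = inclusion g a g := congrArg _ (zpow_one g)

variable {g a}

theorem inclusion_injective (hg : ¬IsOfFinOrder g) (ha : a ≠ 0) : Injective (inclusion g a) := by
  refine Monoid.PushoutI.of_injective (fun b => ?_) true
  cases b
  · have hfin : ¬IsOfFinOrder (ULift.up (Multiplicative.ofAdd a) : ULift (Multiplicative ℤ)) := by
      intro h
      have h' := MulEquiv.ulift.toMonoidHom.isOfFinOrder h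
      rw [isOfFinOrder_iff_eq_one] at h'
      exact ha (Multiplicative.ofAdd.injective h')
    exact injective_zpow_iff_not_isOfFinOrder.mpr hfin
  · exact injective_zpow_iff_not_isOfFinOrder.mpr hg

end RootAmalgam

end

namespace PresentedGroup

variable {X Y : Type*}

theorem lift_mk_comp (rels : Set (FreeGroup Y)) (σ : X → FreeGroup Y) (w : FreeGroup X) :
    FreeGroup.lift (fun x => mk rels (σ x)) w = mk rels (FreeGroup.lift σ w) :=
  DFunLike.congr_fun (FreeGroup.ext_hom (FreeGroup.lift fun x => mk rels (σ x))
    ((mk rels).comp (FreeGroup.lift σ)) fun _ => by simp) w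

def substHom (σ : X → FreeGroup Y) (r : FreeGroup X) :
    PresentedGroup ({r} : Set (FreeGroup X)) →* PresentedGroup {FreeGroup.lift σ r} :=
  toGroup (f := fun x => mk _ (σ x)) <| by
    rintro _ rfl
    rw [lift_mk_comp]
    exact one_of_mem rfl

theorem substHom_of (σ : X → FreeGroup Y) (r : FreeGroup X) (x : X) :
    substHom σ r (of x) = mk _ (σ x) :=
  toGroup.of _

theorem substHom_injective {σ : X → FreeGroup Y} {r : FreeGroup X} {H : Type*} [Group H]
    {ι : PresentedGroup ({r} : Set (FreeGroup X)) →* H} (hι : Injective ι) (f : Y → H)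
    (hf : ∀ x, FreeGroup.lift f (σ x) = ι (of x)) : Injective (substHom σ r) := by
  have hlift : (FreeGroup.lift f).comp (FreeGroup.lift σ) = ι.comp (mk _) :=
    FreeGroup.ext_hom _ _ fun x => by
      rw [MonoidHom.comp_apply, FreeGroup.lift_apply_of]
      exact hf x
  have hrel : ∀ ρ ∈ ({FreeGroup.lift σ r} : Set (FreeGroup Y)), FreeGroup.lift f ρ = 1 := by
    rintro _ rfl
    rw [← MonoidHom.comp_apply, hlift, MonoidHom.comp_apply, one_of_mem (Set.mem_singleton r),
      map_one]
  have hfactor : (toGroup hrel).comp (substHom σ r) = ι :=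
    ext fun x => by
      rw [MonoidHom.comp_apply, substHom_of]
      exact hf x
  refine Injective.of_comp (f := toGroup hrel) ?_
  rwa [← MonoidHom.coe_comp, hfactor]

end PresentedGroup

section Unsubstitution

variable {S : Type*} [DecidableEq S] (u v : S) {H : Type*} [Group H]

def unsubst (β : ℤ) (k : S → H) (t : H) : Bool ⊕ {x : S // x ≠ u ∧ x ≠ v} → H
  | .inl true => t
  | .inl false => k u * t ^ β
  | .inr x => k x

theorem lift_unsubst_substMap {α β : ℤ} {k : S → H} {t : H} (hk : k v = t ^ α) (s : S) :
    FreeGroup.lift (unsubst u v β k t) (substMap u v α β s) = k s := by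
  unfold substMap
  split_ifs with hu hv
  · simp [unsubst, hu, mul_assoc]
  · simp [unsubst, hv, hk]
  · simp [unsubst]

end Unsubstitution

theorem psi_injective_general {S : Type*} [DecidableEq S] (u v : S) (huv : u ≠ v)
    (r : FreeGroup S)
    (α β : ℤ) (hα : expSum u r = α)
    (hα0 : α ≠ 0) :
    ∃ Ψ : PresentedGroup ({r} : Set (FreeGroup S)) →*
        PresentedGroup ({FreeGroup.lift (substMap u v α β) r} :
          Set (FreeGroup (Bool ⊕ {x : S // x ≠ u ∧ x ≠ v}))),
      (∀ x : S, Ψ (PresentedGroup.of x) =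
        PresentedGroup.mk _ (substMap u v α β x)) ∧
      Function.Injective Ψ := by
  have hv : ¬IsOfFinOrder (PresentedGroup.of v : PresentedGroup ({r} : Set (FreeGroup S))) :=
    not_isOfFinOrder_of_expSum_ne_zero huv (hα ▸ hα0)
  refine ⟨PresentedGroup.substHom (substMap u v α β) r, PresentedGroup.substHom_of _ r, ?_⟩
  exact PresentedGroup.substHom_injective (RootAmalgam.inclusion_injective hv hα0)
    (unsubst u v β _ (RootAmalgam.root _ α))
    (lift_unsubst_substMap u v (RootAmalgam.root_zpow _ α).symm)

/-- If `G = ⟨u, v, c, d, … | r⟩` is a one relator group with `r` cyclically reduced and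
the exponent sums `α` of `u` and `β` of `v` in `r` are nonzero, then the homomorphism
`Ψ` determined by `u ↦ b t⁻ᵝ`, `v ↦ tᵅ`, `c ↦ c`, `d ↦ d`, … is an injective
homomorphism from `G` to `C = ⟨t, b, c, d, … | r(b t⁻ᵝ, tᵅ, c, d, …)⟩`. -/
theorem psi_injective {S : Type*} [DecidableEq S] (u v : S) (huv : u ≠ v)
    (r : FreeGroup S) (hr : CyclicallyReduced r)
    (α β : ℤ) (hα : expSum u r = α) (hβ : expSum v r = β)
    (hα0 : α ≠ 0) (hβ0 : β ≠ 0) :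
    ∃ Ψ : PresentedGroup ({r} : Set (FreeGroup S)) →*
        PresentedGroup ({FreeGroup.lift (substMap u v α β) r} :
          Set (FreeGroup (Bool ⊕ {x : S // x ≠ u ∧ x ≠ v}))),
      (∀ x : S, Ψ (PresentedGroup.of x) =
        PresentedGroup.mk _ (substMap u v α β x)) ∧
      Function.Injective Ψ :=
  psi_injective_general u v huv r α β hα hα0
end

section
/- Let G and H be groups and let Γ be a finitely generated subgroup of the free product G * H. Then there exist finitely generated subgroups G₀ ≤ G and H₀ ≤ H such that Γ is contained in the subgroup of G * H generated by G₀ and H₀, and that subgroup is isomorphic to the free product G₀ * H₀. -/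
/-!
Every element of `G ∗ H` is a finite product of letters from `G` and `H`, so the finitely many
generators of `Γ` involve only finitely many letters; these generate `G₀` and `H₀`. The subgroup
generated by `G₀` and `H₀` is the image of `Coprod.map G₀.subtype H₀.subtype`, which is injective:
a reduced word over `G₀, H₀` stays reduced over `G, H`, and reduced words are a normal form.
-/

open Monoid Function Filter

namespace Monoid.CoprodI

variable {ι : Type*} {M N : ι → Type*} [∀ i, Monoid (M i)] [∀ i, Monoid (N i)]
  {f : ∀ i, M i →* N i}

def Word.map (f : ∀ i, M i →* N i) (hf : ∀ i, Injective (f i)) (w : Word M) : Word N where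
  toList := w.toList.map fun l => ⟨l.1, f l.1 l.2⟩
  ne_one := by
    simp only [List.mem_map]
    rintro _ ⟨l, hl, rfl⟩
    exact (map_ne_one_iff (f l.1) (hf l.1)).2 (w.ne_one l hl)
  chain_ne := (List.isChain_map _).2 w.chain_ne

theorem Word.map_injective (hf : ∀ i, Injective (f i)) : Injective (Word.map f hf) := by
  intro w v h
  refine Word.ext (List.map_injective_iff.2 ?_ (congrArg Word.toList h))
  rintro ⟨i, m⟩ ⟨j, n⟩ hmn
  simp only [Sigma.mk.injEq] at hmn
  obtain ⟨rfl, hmn⟩ := hmn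
  rw [hf i (eq_of_heq hmn)]

theorem Word.prod_map (hf : ∀ i, Injective (f i)) (w : Word M) :
    (w.map f hf).prod = lift (fun i => of.comp (f i)) w.prod := by
  simp [Word.prod, Word.map, map_list_prod, Function.comp_def]

theorem lift_of_comp_injective (hf : ∀ i, Injective (f i)) :
    Injective (lift fun i => (of : N i →* CoprodI N).comp (f i)) := by
  classical
  have hprod : ∀ x : CoprodI M, (Word.equiv x).prod = x := Word.equiv.symm_apply_apply
  intro x y h
  rw [← hprod x, ← hprod y, ← Word.prod_map hf, ← Word.prod_map hf] at h
  exact Word.equiv.injective (Word.map_injective hf (Word.equiv.symm.injective h))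

end Monoid.CoprodI

namespace Monoid.Coprod

universe u v u' v'

variable (M : Type u) (N : Type v) [Monoid M] [Monoid N]

/-- `ULift` brings both factors into one universe, so that `M ∗ N` can be compared with the
`Bool`-indexed `CoprodI` and its reduced-word normal form. -/
abbrev boolFamily : Bool → Type (max u v) := fun b => cond b (ULift.{v} M) (ULift.{u} N)

instance : ∀ b, Monoid (boolFamily M N b)
  | true => ULift.monoid
  | false => ULift.monoid

def toCoprodI : M ∗ N →* CoprodI (boolFamily M N) :=
  lift ((CoprodI.of (i := true)).comp MulEquiv.ulift.symm.toMonoidHom)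
    ((CoprodI.of (i := false)).comp MulEquiv.ulift.symm.toMonoidHom)

def ofCoprodI : CoprodI (boolFamily M N) →* M ∗ N :=
  CoprodI.lift fun
    | true => inl.comp (MulEquiv.ulift : ULift.{v} M ≃* M).toMonoidHom
    | false => inr.comp (MulEquiv.ulift : ULift.{u} N ≃* N).toMonoidHom

theorem ofCoprodI_comp_toCoprodI : (ofCoprodI M N).comp (toCoprodI M N) = .id _ :=
  hom_ext rfl rfl

theorem toCoprodI_injective : Injective (toCoprodI M N) :=
  LeftInverse.injective (DFunLike.congr_fun (ofCoprodI_comp_toCoprodI M N))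

variable {M N} {M' : Type u'} {N' : Type v'} [Monoid M'] [Monoid N']

def boolFamilyMap (f : M →* M') (g : N →* N') : ∀ b, boolFamily M N b →* boolFamily M' N' b
  | true => MulEquiv.ulift.symm.toMonoidHom.comp (f.comp MulEquiv.ulift.toMonoidHom)
  | false => MulEquiv.ulift.symm.toMonoidHom.comp (g.comp MulEquiv.ulift.toMonoidHom)

theorem toCoprodI_comp_map (f : M →* M') (g : N →* N') :
    (toCoprodI M' N').comp (map f g) =
      (CoprodI.lift fun b => CoprodI.of.comp (boolFamilyMap f g b)).comp (toCoprodI M N) :=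
  hom_ext rfl rfl

theorem map_injective {f : M →* M'} {g : N →* N'} (hf : Injective f) (hg : Injective g) :
    Injective (map f g) := by
  have hfg : ∀ b, Injective (boolFamilyMap f g b)
    | true => ULift.up_injective.comp (hf.comp ULift.down_injective)
    | false => ULift.up_injective.comp (hg.comp ULift.down_injective)
  intro x y h
  apply toCoprodI_injective M N
  apply CoprodI.lift_of_comp_injective hfg
  simpa only [← MonoidHom.comp_apply, toCoprodI_comp_map] using congrArg (toCoprodI M' N') h

section Group

variable {G H : Type*} [Group G] [Group H]

theorem range_map {G' H' : Type*} [Group G'] [Group H'] (f : G →* G') (g : H →* H') :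
    (map f g).range = f.range.map inl ⊔ g.range.map inr := by
  rw [show map f g = lift (inl.comp f) (inr.comp g) from hom_ext rfl rfl, range_lift,
    MonoidHom.map_range, MonoidHom.map_range]

theorem exists_fg_le_map_inl_sup_map_inr {Γ : Subgroup (G ∗ H)} (hΓ : Γ.FG) :
    ∃ (G₀ : Subgroup G) (H₀ : Subgroup H), G₀.FG ∧ H₀.FG ∧ Γ ≤ G₀.map inl ⊔ H₀.map inr := by
  classical
  let K : Finset G × Finset H → Subgroup (G ∗ H) := fun p =>
    (Subgroup.closure (p.1 : Set G)).map inl ⊔ (Subgroup.closure (p.2 : Set H)).map inr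
  have hK : Monotone K := fun p q hpq =>
    sup_le_sup (Subgroup.map_mono (Subgroup.closure_mono hpq.1))
      (Subgroup.map_mono (Subgroup.closure_mono hpq.2))
  have hsup : ⨆ p, K p = ⊤ := by
    rw [eq_top_iff, ← range_inl_sup_range_inr, sup_le_iff]
    constructor
    · rintro _ ⟨g, rfl⟩
      exact Subgroup.mem_iSup_of_mem ({g}, ∅) (Subgroup.mem_sup_left
        (Subgroup.mem_map_of_mem _ (Subgroup.subset_closure (by simp))))
    · rintro _ ⟨h, rfl⟩
      exact Subgroup.mem_iSup_of_mem (∅, {h}) (Subgroup.mem_sup_right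
        (Subgroup.mem_map_of_mem _ (Subgroup.subset_closure (by simp))))
  have hx : ∀ x, ∀ᶠ p in atTop, x ∈ K p := fun x => by
    obtain ⟨p, hp⟩ := (Subgroup.mem_iSup_of_directed hK.directed_le).1 (hsup ▸ Subgroup.mem_top x)
    exact eventually_atTop.2 ⟨p, fun q hq => hK hq hp⟩
  obtain ⟨S, rfl⟩ := hΓ
  obtain ⟨p, hp⟩ := (S.finite_toSet.eventually_all.2 fun x _ => hx x).exists
  exact ⟨_, _, ⟨p.1, rfl⟩, ⟨p.2, rfl⟩, (Subgroup.closure_le _).2 hp⟩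

end Group

end Monoid.Coprod

/-- Every finitely generated subgroup `Γ` of a free product `G * H` is contained in the
subgroup generated by finitely generated subgroups `G₀ ≤ G` and `H₀ ≤ H`, and that
subgroup is isomorphic to the free product `G₀ * H₀`. -/
theorem fg_subgroup_of_free_product {G H : Type*} [Group G] [Group H]
    (Γ : Subgroup (Monoid.Coprod G H)) (hΓ : Γ.FG) :
    ∃ (G₀ : Subgroup G) (H₀ : Subgroup H), G₀.FG ∧ H₀.FG ∧
      Γ ≤ G₀.map Monoid.Coprod.inl ⊔ H₀.map Monoid.Coprod.inr ∧
      Nonempty ((↥(G₀.map Monoid.Coprod.inl ⊔ H₀.map Monoid.Coprod.inr : Subgroup (Monoid.Coprod G H))) ≃*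
        Monoid.Coprod G₀ H₀) := by
  obtain ⟨G₀, H₀, hG₀, hH₀, hΓ_le⟩ := Coprod.exists_fg_le_map_inl_sup_map_inr hΓ
  refine ⟨G₀, H₀, hG₀, hH₀, hΓ_le, ⟨?_⟩⟩
  have hrange :
      (Coprod.map G₀.subtype H₀.subtype).range = G₀.map Coprod.inl ⊔ H₀.map Coprod.inr := by
    rw [Coprod.range_map, G₀.range_subtype, H₀.range_subtype]
  exact (MulEquiv.subgroupCongr hrange.symm).trans
    (MonoidHom.ofInjective (Coprod.map_injective G₀.subtype_injective H₀.subtype_injective)).symm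
end
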